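/- arXiv:0905.4072 — 2 statements merged into one kernel-verified Lean document; each statement's English description precedes it below -/
import Mathlib

section
/- Let L > 0 and let ψ : ℝ → ℝ be a non-constant, even, C², L-periodic function with fundamental period L, with ψ(x) > 0 for all x, satisfying ψ''(x) − ψ(x) + ψ(x)² = 0 for all x ∈ ℝ. Suppose f, g : ℝ → ℝ are even, C², L-periodic functions satisfying −f'' + f − ψ f − ψ g = 0 and −g'' + g − 2ψ f = 0 on ℝ. Then f = g = 0. (That is, the Fréchet derivative B of the map Φ(ω, ψ, φ) = (−ψ'' + ωψ − ψφ, −φ'' + φ − ψ²) at (1, ψ, ψ) has trivial kernel on even periodic functions, which permits an application of the Implicit Function Theorem producing solutions of the traveling-wave system for ω near 1.) -/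
open Set intervalIntegral

lemma periodic_deriv_aux (f : ℝ → ℝ) (L : ℝ) (hper : Function.Periodic f L) :
    Function.Periodic (deriv f) L := by
  intro x
  have h : (fun y => f (y + L)) = f := funext hper
  calc deriv f (x + L) = deriv (fun y => f (y + L)) x := (deriv_comp_add_const f L x).symm
    _ = deriv f x := by rw [h]

lemma ode_unique_aux {a u u1 : ℝ → ℝ} {C : ℝ} (hC : ∀ t, |a t| ≤ C)
    (hu : ∀ t, HasDerivAt u (u1 t) t) (hu1 : ∀ t, HasDerivAt u1 (a t * u t) t)
    {x₁ : ℝ} (h0 : u x₁ = 0) (h1 : u1 x₁ = 0) : ∀ x, u x = 0 := by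
  have hCnn : (0:ℝ) ≤ C := le_trans (abs_nonneg _) (hC 0)
  set K : NNReal := ⟨max 1 C, le_trans zero_le_one (le_max_left 1 C)⟩ with hKdef
  set v : ℝ → ℝ × ℝ → ℝ × ℝ := fun t y => (y.2, a t * y.1) with hvdef
  have hlip : ∀ t, LipschitzOnWith K (v t) Set.univ := by
    intro t
    apply LipschitzWith.lipschitzOnWith
    apply LipschitzWith.of_dist_le_mul
    intro y z
    have hK : (K : ℝ) = max 1 C := rfl
    rw [hK, Prod.dist_eq, Prod.dist_eq]
    simp only [hvdef]
    have h2 : |a t * y.1 - a t * z.1| = |a t| * |y.1 - z.1| := by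
      rw [← abs_mul]; ring_nf
    have h3 : |a t| * |y.1 - z.1| ≤ C * |y.1 - z.1| :=
      mul_le_mul_of_nonneg_right (hC t) (abs_nonneg _)
    have h4 := le_max_left |y.1 - z.1| |y.2 - z.2|
    have h5 := le_max_right |y.1 - z.1| |y.2 - z.2|
    have h6 := le_max_left (1:ℝ) C
    have h7 := le_max_right (1:ℝ) C
    have h8 : (0:ℝ) ≤ |y.1 - z.1| := abs_nonneg _
    have h9 : (0:ℝ) ≤ |y.2 - z.2| := abs_nonneg _
    simp only [Real.dist_eq]
    apply max_le
    · nlinarith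
    · rw [h2]; nlinarith
  intro x
  set F : ℝ → ℝ × ℝ := fun t => (u t, u1 t) with hFdef
  set Z : ℝ → ℝ × ℝ := fun _ => ((0:ℝ), (0:ℝ)) with hZdef
  have hcont : ContinuousOn F (Icc (x₁ - (|x - x₁| + 1)) (x₁ + (|x - x₁| + 1))) :=
    (Continuous.prodMk
      (continuous_iff_continuousAt.mpr fun t => (hu t).continuousAt)
      (continuous_iff_continuousAt.mpr fun t => (hu1 t).continuousAt)).continuousOn
  have key := ODE_solution_unique_of_mem_Icc (v := v) (s := fun _ => Set.univ) (fun t _ => hlip t)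
    (t₀ := x₁) (a := x₁ - (|x - x₁| + 1)) (b := x₁ + (|x - x₁| + 1))
    ⟨by have := abs_nonneg (x - x₁); linarith, by have := abs_nonneg (x - x₁); linarith⟩
    hcont
    (fun t _ => by simpa [hvdef, hFdef] using (hu t).prodMk (hu1 t))
    (fun t _ => trivial)
    continuousOn_const
    (fun t _ => by
      have : v t (Z t) = ((0:ℝ), (0:ℝ)) := by simp [hvdef, hZdef]
      rw [this]
      exact hasDerivAt_const t _)
    (fun t _ => trivial)
    (by simp [hFdef, hZdef, h0, h1])
  have hx : x ∈ Icc (x₁ - (|x - x₁| + 1)) (x₁ + (|x - x₁| + 1)) := by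
    constructor
    · have : -(|x - x₁|) ≤ x - x₁ := neg_abs_le _
      linarith
    · have := le_abs_self (x - x₁); linarith
  have hFx := key hx
  have : u x = (Z x).1 := congrArg Prod.fst hFx
  simpa [hZdef] using this

/-- On even `L`-periodic functions the Fréchet derivative of
`Φ(ω, ψ, φ) = (−ψ'' + ωψ − ψφ, −φ'' + φ − ψ²)` at `(1, ψ, ψ)` has trivial kernel:
any even, `C²`, `L`-periodic pair `(f, g)` with `−f'' + f − ψf − ψg = 0` and
`−g'' + g − 2ψf = 0` vanishes identically. -/
theorem stmt_17 (L : ℝ) (hL : 0 < L) (ψ : ℝ → ℝ)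
    (hψ : ContDiff ℝ 2 ψ) (hnc : ∃ x y : ℝ, ψ x ≠ ψ y)
    (heven : ∀ x, ψ (-x) = ψ x)
    (hfund : IsLeast {T : ℝ | 0 < T ∧ Function.Periodic ψ T} L)
    (hpos : ∀ x, 0 < ψ x)
    (hode : ∀ x, deriv (deriv ψ) x - ψ x + ψ x ^ 2 = 0)
    (f g : ℝ → ℝ)
    (hf : ContDiff ℝ 2 f) (hfper : Function.Periodic f L)
    (hfe : ∀ x, f (-x) = f x)
    (hg : ContDiff ℝ 2 g) (hgper : Function.Periodic g L)
    (hge : ∀ x, g (-x) = g x)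
    (heq1 : ∀ x, -deriv (deriv f) x + f x - ψ x * f x - ψ x * g x = 0)
    (heq2 : ∀ x, -deriv (deriv g) x + g x - 2 * ψ x * f x = 0) :
    (∀ x, f x = 0) ∧ (∀ x, g x = 0) := by
  have hψper : Function.Periodic ψ L := hfund.1.2
  -- smoothness bookkeeping
  have hsplit : ∀ (F : ℝ → ℝ), ContDiff ℝ 2 F →
      Differentiable ℝ F ∧ Differentiable ℝ (deriv F) ∧ Continuous (deriv F) := by
    intro F hF
    have h := (contDiff_succ_iff_deriv (n := 1)).mp (by norm_num; exact hF)
    exact ⟨h.1, h.2.2.differentiable (by norm_num), h.2.2.continuous⟩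
  obtain ⟨hψdiff, hψ1diff, hψ1cont⟩ := hsplit ψ hψ
  obtain ⟨hfdiff, hf1diff, hf1cont⟩ := hsplit f hf
  obtain ⟨hgdiff, hg1diff, hg1cont⟩ := hsplit g hg
  set p1 : ℝ → ℝ := deriv ψ with hp1def
  set f1 : ℝ → ℝ := deriv f with hf1def
  set g1 : ℝ → ℝ := deriv g with hg1def
  have hcψ : Continuous ψ := hψ.continuous
  have hcf : Continuous f := hf.continuous
  have hcg : Continuous g := hg.continuous
  have hP : ∀ x, HasDerivAt ψ (p1 x) x := fun x => (hψdiff x).hasDerivAt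
  have hF : ∀ x, HasDerivAt f (f1 x) x := fun x => (hfdiff x).hasDerivAt
  have hG : ∀ x, HasDerivAt g (g1 x) x := fun x => (hgdiff x).hasDerivAt
  have hQ : ∀ x, HasDerivAt p1 (ψ x - ψ x ^ 2) x := by
    intro x
    have h := (hψ1diff x).hasDerivAt
    have h2 : deriv p1 x = ψ x - ψ x ^ 2 := by
      have := hode x; rw [hp1def]; linarith
    rwa [h2] at h
  have hF1 : ∀ x, HasDerivAt f1 (f x - ψ x * f x - ψ x * g x) x := by
    intro x
    have h := (hf1diff x).hasDerivAt
    have h2 : deriv f1 x = f x - ψ x * f x - ψ x * g x := by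
      have := heq1 x; rw [hf1def]; linarith
    rwa [h2] at h
  have hG1 : ∀ x, HasDerivAt g1 (g x - 2 * ψ x * f x) x := by
    intro x
    have h := (hg1diff x).hasDerivAt
    have h2 : deriv g1 x = g x - 2 * ψ x * f x := by
      have := heq2 x; rw [hg1def]; linarith
    rwa [h2] at h
  -- periodicity of derivatives
  have hp1per : Function.Periodic p1 L := periodic_deriv_aux ψ L hψper
  have hf1per : Function.Periodic f1 L := periodic_deriv_aux f L hfper
  have hg1per : Function.Periodic g1 L := periodic_deriv_aux g L hgper
  have hψL : ψ L = ψ 0 := by have := hψper 0; simpa using this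
  have hp1L : p1 L = p1 0 := by have := hp1per 0; simpa using this
  have hfL : f L = f 0 := by have := hfper 0; simpa using this
  have hf1L : f1 L = f1 0 := by have := hf1per 0; simpa using this
  have hgL : g L = g 0 := by have := hgper 0; simpa using this
  have hg1L : g1 L = g1 0 := by have := hg1per 0; simpa using this
  -- STEP A : f = g
  have hwd : ∀ x, HasDerivAt (fun y => (f y - g y) * (f1 y - g1 y))
      ((f1 x - g1 x) ^ 2 + (1 + ψ x) * (f x - g x) ^ 2) x := by
    intro x
    have h := ((hF x).sub (hG x)).mul ((hF1 x).sub (hG1 x))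
    exact h.congr_deriv (by norm_num [Pi.mul_apply, Pi.sub_apply, Pi.add_apply, Pi.pow_apply] <;> ring)
  have hwint : (∫ x in (0:ℝ)..L,
      ((f1 x - g1 x) ^ 2 + (1 + ψ x) * (f x - g x) ^ 2)) = 0 := by
    rw [integral_eq_sub_of_hasDerivAt (fun x _ => hwd x)
      (((((hf1cont.sub hg1cont).pow 2).add
        ((continuous_const.add hcψ).mul ((hcf.sub hcg).pow 2)))).intervalIntegrable 0 L)]
    rw [hfL, hgL, hf1L, hg1L]
    ring
  have hfg : ∀ x, f x - g x = 0 := by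
    by_contra hcon
    push_neg at hcon
    obtain ⟨z, hz⟩ := hcon
    have hwper : Function.Periodic (fun y => f y - g y) L := fun y => by
      simp [hfper y, hgper y]
    obtain ⟨z', hz'mem, hz'eq⟩ := hwper.exists_mem_Ico₀ hL z
    have hz'eq' : f z - g z = f z' - g z' := by simpa using hz'eq
    have hz' : f z' - g z' ≠ 0 := by rw [← hz'eq']; exact hz
    have hpos2 : 0 < (∫ x in (0:ℝ)..L,
        ((f1 x - g1 x) ^ 2 + (1 + ψ x) * (f x - g x) ^ 2)) := by
      apply intervalIntegral.integral_pos hL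
      · exact (((hf1cont.sub hg1cont).pow 2).add
          ((continuous_const.add hcψ).mul ((hcf.sub hcg).pow 2))).continuousOn
      · intro x _
        have h1 := sq_nonneg (f1 x - g1 x)
        have h2 := sq_nonneg (f x - g x)
        have h3 := (hpos x).le
        nlinarith
      · refine ⟨z', ⟨hz'mem.1, hz'mem.2.le⟩, ?_⟩
        have h1 := sq_nonneg (f1 z' - g1 z')
        have h2 : 0 < (f z' - g z') ^ 2 :=
          lt_of_le_of_ne (sq_nonneg _) (Ne.symm (pow_ne_zero 2 hz'))
        have h3 := hpos z'
        nlinarith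
    rw [hwint] at hpos2
    exact lt_irrefl 0 hpos2
  -- rewrite f1' using f = g
  have hF1' : ∀ x, HasDerivAt f1 ((1 - 2 * ψ x) * f x) x := by
    intro x
    have h := hF1 x
    have h2 : f x - ψ x * f x - ψ x * g x = (1 - 2 * ψ x) * f x := by
      linear_combination ψ x * hfg x
    rwa [h2] at h
  -- the Wronskian is constant
  have hcd : ∀ x, HasDerivAt (fun y => f y * (ψ y - ψ y ^ 2) - f1 y * p1 y) 0 x := by
    intro x
    have h := ((hF x).mul ((hP x).sub ((hP x).pow 2))).sub ((hF1' x).mul (hQ x))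
    exact h.congr_deriv (by norm_num [Pi.mul_apply, Pi.sub_apply, Pi.add_apply, Pi.pow_apply] <;> ring)
  have hcconst : ∀ x, f x * (ψ x - ψ x ^ 2) - f1 x * p1 x
      = f 0 * (ψ 0 - ψ 0 ^ 2) - f1 0 * p1 0 := by
    intro x
    have hd : Differentiable ℝ (fun y => f y * (ψ y - ψ y ^ 2) - f1 y * p1 y) :=
      fun y => ((hcd y).differentiableAt)
    have hz : ∀ y, deriv (fun y => f y * (ψ y - ψ y ^ 2) - f1 y * p1 y) y = 0 :=
      fun y => (hcd y).deriv
    exact is_const_of_deriv_eq_zero hd hz x 0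
  set c0 : ℝ := f 0 * (ψ 0 - ψ 0 ^ 2) - f1 0 * p1 0 with hc0def
  -- the big antiderivative identity
  have hBig : ∀ x, HasDerivAt (fun y =>
      f1 y * (3 * ψ y + ψ y ^ 2 - 8 * ψ y ^ 3 + 4 * ψ y ^ 4 - 7 * p1 y ^ 2
        + 9 * (ψ y * p1 y ^ 2))
      + f y * p1 y * (-3 + 7 * ψ y + 2 * ψ y ^ 2 - 3 * ψ y ^ 3 - 9 * p1 y ^ 2))
      (5 * (f x * (ψ x - ψ x ^ 2) - f1 x * p1 x) * (ψ x ^ 3 - 2 * ψ x ^ 2 + ψ x)) x := by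
    intro x
    have hA := ((((((hP x).const_mul 3).add ((hP x).pow 2)).sub
      (((hP x).pow 3).const_mul 8)).add (((hP x).pow 4).const_mul 4)).sub
      (((hQ x).pow 2).const_mul 7)).add (((hP x).mul ((hQ x).pow 2)).const_mul 9)
    have hB := ((((hasDerivAt_const x (-3:ℝ)).add ((hP x).const_mul 7)).add
      (((hP x).pow 2).const_mul 2)).sub (((hP x).pow 3).const_mul 3)).sub
      (((hQ x).pow 2).const_mul 9)
    have h := ((hF1' x).mul hA).add (((hF x).mul (hQ x)).mul hB)
    exact h.congr_deriv (by norm_num [Pi.mul_apply, Pi.sub_apply, Pi.add_apply, Pi.pow_apply] <;> ring)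
  have hbigint : (5 * c0) * (∫ x in (0:ℝ)..L, (ψ x ^ 3 - 2 * ψ x ^ 2 + ψ x)) = 0 := by
    have h1 : (∫ x in (0:ℝ)..L,
        5 * (f x * (ψ x - ψ x ^ 2) - f1 x * p1 x) * (ψ x ^ 3 - 2 * ψ x ^ 2 + ψ x)) = 0 := by
      rw [integral_eq_sub_of_hasDerivAt (fun x _ => hBig x) ?_]
      · rw [hfL, hf1L, hψL, hp1L]; ring
      · apply Continuous.intervalIntegrable
        apply Continuous.mul
        · apply Continuous.mul continuous_const
          exact (hcf.mul (hcψ.sub (hcψ.pow 2))).sub (hf1cont.mul hψ1cont)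
        · exact ((hcψ.pow 3).sub (continuous_const.mul (hcψ.pow 2))).add hcψ
    have h2 : (fun x => 5 * (f x * (ψ x - ψ x ^ 2) - f1 x * p1 x)
        * (ψ x ^ 3 - 2 * ψ x ^ 2 + ψ x))
        = (fun x => (5 * c0) * (ψ x ^ 3 - 2 * ψ x ^ 2 + ψ x)) := by
      funext x
      rw [hcconst x]
    rw [h2, intervalIntegral.integral_const_mul] at h1
    exact h1
  -- the integral of ψ(ψ-1)² is positive
  have hintpos : 0 < (∫ x in (0:ℝ)..L, (ψ x ^ 3 - 2 * ψ x ^ 2 + ψ x)) := by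
    obtain ⟨zx, zy, hzne⟩ := hnc
    have hzex : ∃ z : ℝ, ψ z ≠ 1 := by
      by_cases h : ψ zx = 1
      · exact ⟨zy, fun hh => hzne (by rw [h, hh])⟩
      · exact ⟨zx, h⟩
    obtain ⟨z, hzne1⟩ := hzex
    obtain ⟨z', hz'mem, hz'eq⟩ := hψper.exists_mem_Ico₀ hL z
    have hz'ne1 : ψ z' ≠ 1 := by rw [← hz'eq]; exact hzne1
    apply intervalIntegral.integral_pos hL
    · exact (((hcψ.pow 3).sub (continuous_const.mul (hcψ.pow 2))).add hcψ).continuousOn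
    · intro x _
      have h1 := sq_nonneg (ψ x - 1)
      have h2 := (hpos x).le
      nlinarith
    · refine ⟨z', ⟨hz'mem.1, hz'mem.2.le⟩, ?_⟩
      have h1 : ψ z' - 1 ≠ 0 := sub_ne_zero.mpr hz'ne1
      have h2 : 0 < (ψ z' - 1) ^ 2 :=
        lt_of_le_of_ne (sq_nonneg _) (Ne.symm (pow_ne_zero 2 h1))
      have h3 := hpos z'
      nlinarith
  have hc0 : c0 = 0 := by
    by_contra hcc
    have : (5 * c0) * (∫ x in (0:ℝ)..L, (ψ x ^ 3 - 2 * ψ x ^ 2 + ψ x)) ≠ 0 :=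
      mul_ne_zero (by simpa using hcc) (ne_of_gt hintpos)
    exact this hbigint
  have hczero : ∀ x, f x * (ψ x - ψ x ^ 2) - f1 x * p1 x = 0 := by
    intro x; rw [hcconst x]; exact hc0
  -- ψ' is not identically zero
  have hp1ne : ∃ x₁, p1 x₁ ≠ 0 := by
    by_contra hcon
    push_neg at hcon
    obtain ⟨zx, zy, hzne⟩ := hnc
    exact hzne (is_const_of_deriv_eq_zero hψdiff hcon zx zy)
  obtain ⟨x₁, hx₁⟩ := hp1ne
  -- boundedness of 1 - 2ψ
  have hbound : ∃ C, ∀ t, |1 - 2 * ψ t| ≤ C := by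
    obtain ⟨C, hC⟩ := (isCompact_Icc (a := (0:ℝ)) (b := L)).exists_bound_of_continuousOn
      (f := fun y => 1 - 2 * ψ y)
      ((continuous_const.sub (continuous_const.mul hcψ)).continuousOn)
    refine ⟨C, fun t => ?_⟩
    obtain ⟨t', ht'mem, ht'eq⟩ := Function.Periodic.exists_mem_Ico₀
      (f := fun y : ℝ => 1 - 2 * ψ y) (fun y => by simp [hψper y]) hL t
    have ht'eq' : 1 - 2 * ψ t = 1 - 2 * ψ t' := ht'eq
    have h2 := hC t' ⟨ht'mem.1, ht'mem.2.le⟩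
    rw [Real.norm_eq_abs] at h2
    rw [ht'eq']
    exact h2
  obtain ⟨C, hC⟩ := hbound
  -- f is a multiple of ψ'
  set α : ℝ := f x₁ / p1 x₁ with hαdef
  have hu : ∀ t, HasDerivAt (fun y => f y - α * p1 y) (f1 t - α * (ψ t - ψ t ^ 2)) t :=
    fun t => (hF t).sub ((hQ t).const_mul α)
  have hu1 : ∀ t, HasDerivAt (fun y => f1 y - α * (ψ y - ψ y ^ 2))
      ((1 - 2 * ψ t) * (f t - α * p1 t)) t := by
    intro t
    have h := (hF1' t).sub ((((hP t).sub ((hP t).pow 2))).const_mul α)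
    exact h.congr_deriv (by norm_num [Pi.mul_apply, Pi.sub_apply, Pi.add_apply, Pi.pow_apply] <;> ring)
  have h0 : f x₁ - α * p1 x₁ = 0 := by
    rw [hαdef]; field_simp; simp
  have h1 : f1 x₁ - α * (ψ x₁ - ψ x₁ ^ 2) = 0 := by
    have hw := hczero x₁
    rw [hαdef]
    field_simp
    linarith
  have hueq : ∀ x, f x - α * p1 x = 0 := ode_unique_aux hC hu hu1 h0 h1
  -- ψ' is odd
  have hodd : ∀ x, p1 (-x) = - p1 x := by
    intro x
    have h : (fun y => ψ (-y)) = ψ := funext heven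
    have h2 := deriv_comp_neg (f := ψ) (x := x)
    rw [h] at h2
    rw [hp1def]
    linarith
  have hfzero : ∀ x, f x = 0 := by
    intro x
    have h1 : f x = α * p1 x := by have := hueq x; linarith
    have h2 : f (-x) = α * p1 (-x) := by have := hueq (-x); linarith
    rw [hfe x, hodd x] at h2
    have h2' : f x = -(α * p1 x) := by rw [h2]; ring
    linarith
  exact ⟨hfzero, fun x => by have := hfg x; have := hfzero x; linarith⟩
end

section
/- The function φ : (0,1) → ℝ defined by φ(k) = K(k)² · ( √(k⁴ − k² + 1) + k² − 2 ) + 3·K(k)·E(k) is strictly increasing on (0,1). -/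
/-- The complete elliptic integral of the first kind,
`K(k) = ∫₀¹ dt / √((1 − t²)(1 − k²t²))`. -/
noncomputable def ellipticK (k : ℝ) : ℝ :=
  ∫ t in (0 : ℝ)..1, 1 / Real.sqrt ((1 - t ^ 2) * (1 - k ^ 2 * t ^ 2))

/-- The complete elliptic integral of the second kind,
`E(k) = ∫₀¹ √(1 − k²t²)/√(1 − t²) dt`. -/
noncomputable def ellipticE (k : ℝ) : ℝ :=
  ∫ t in (0 : ℝ)..1, Real.sqrt (1 - k ^ 2 * t ^ 2) / Real.sqrt (1 - t ^ 2)

open Real MeasureTheory Set intervalIntegral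


noncomputable def Kf (k t : ℝ) : ℝ := 1 / Real.sqrt ((1 - t ^ 2) * (1 - k ^ 2 * t ^ 2))
noncomputable def Ef (k t : ℝ) : ℝ := Real.sqrt (1 - k ^ 2 * t ^ 2) / Real.sqrt (1 - t ^ 2)
noncomputable def Kd (k t : ℝ) : ℝ :=
  k * t ^ 2 * (1 - t ^ 2) / Real.sqrt ((1 - t ^ 2) * (1 - k ^ 2 * t ^ 2)) ^ 3
noncomputable def Ed (k t : ℝ) : ℝ :=
  -(k * t ^ 2) / (Real.sqrt (1 - k ^ 2 * t ^ 2) * Real.sqrt (1 - t ^ 2))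

lemma intervalIntegrable_inv_sqrt_one_sub :
    IntervalIntegrable (fun t : ℝ => ((1 - t) ^ (-(1/2) : ℝ))) volume 0 1 := by
  have h := (intervalIntegral.intervalIntegrable_rpow' (a := 0) (b := 1)
    (r := -(1/2)) (by norm_num)).comp_sub_left 1
  simpa using h.symm

/-- Master integrability lemma : bounded by `C/√(1-t)` on `(0,1]` gives interval
integrability on `[0,1]`. -/
lemma intervalIntegrable_of_bound (f : ℝ → ℝ) (C : ℝ)
    (hm : AEStronglyMeasurable f (volume.restrict (Set.uIoc (0:ℝ) 1)))
    (h : ∀ t ∈ Set.Ioc (0:ℝ) 1, |f t| ≤ C / Real.sqrt (1 - t)) :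
    IntervalIntegrable f volume 0 1 := by
  apply (intervalIntegrable_inv_sqrt_one_sub.const_mul C).mono_fun hm
  rw [Filter.EventuallyLE, ae_restrict_iff' measurableSet_uIoc]
  filter_upwards with t ht
  rw [Set.uIoc_of_le (by norm_num : (0:ℝ) ≤ 1)] at ht
  have h1 : (0:ℝ) ≤ 1 - t := by linarith [ht.2]
  have : C / Real.sqrt (1 - t) = C * (1 - t) ^ (-(1/2) : ℝ) := by
    rw [Real.rpow_neg h1, Real.sqrt_eq_rpow, div_eq_mul_inv]
  calc ‖f t‖ = |f t| := rfl
    _ ≤ C / Real.sqrt (1 - t) := h t ht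
    _ = C * (1 - t) ^ (-(1/2) : ℝ) := this
    _ ≤ ‖C * (1 - t) ^ (-(1/2) : ℝ)‖ := le_abs_self _
lemma meas_aux (f : ℝ → ℝ) (hf : Measurable f) :
    AEStronglyMeasurable f (volume.restrict (Set.uIoc (0:ℝ) 1)) :=
  hf.aestronglyMeasurable

lemma measKf (k : ℝ) : Measurable (Kf k) := by
  unfold Kf
  exact measurable_const.div (by fun_prop)

lemma measEf (k : ℝ) : Measurable (Ef k) := by
  unfold Ef
  exact (by fun_prop : Measurable fun t : ℝ => Real.sqrt (1 - k ^ 2 * t ^ 2)).div (by fun_prop)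

lemma measKd (k : ℝ) : Measurable (Kd k) := by
  unfold Kd
  exact (by fun_prop : Measurable fun t : ℝ => k * t ^ 2 * (1 - t ^ 2)).div (by fun_prop)

lemma measEd (k : ℝ) : Measurable (Ed k) := by
  unfold Ed
  exact (by fun_prop : Measurable fun t : ℝ => -(k * t ^ 2)).div (by fun_prop)

lemma intBound {C : ℝ} (hC : 0 ≤ C) :
    IntervalIntegrable (fun t : ℝ => C / Real.sqrt (1 - t)) volume 0 1 := by
  apply intervalIntegrable_of_bound _ C
  · exact meas_aux _ (measurable_const.div (by fun_prop))
  · intro t _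
    rw [abs_of_nonneg (div_nonneg hC (Real.sqrt_nonneg _))]

lemma key_sqrt_le {k t : ℝ} (hk : k ^ 2 < 1) (ht0 : 0 < t) (ht1 : t < 1) :
    Real.sqrt (1 - t) * Real.sqrt (1 - k ^ 2) ≤
      Real.sqrt ((1 - t ^ 2) * (1 - k ^ 2 * t ^ 2)) := by
  rw [← Real.sqrt_mul (by linarith)]
  apply Real.sqrt_le_sqrt
  have h1 : (1:ℝ) - t ≤ 1 - t ^ 2 := by nlinarith
  have h2 : (1:ℝ) - k ^ 2 ≤ 1 - k ^ 2 * t ^ 2 := by nlinarith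
  have h3 : (0:ℝ) ≤ 1 - t := by linarith
  have h4 : (0:ℝ) ≤ 1 - k ^ 2 := by linarith
  exact mul_le_mul h1 h2 h4 (by linarith)

lemma intK {k : ℝ} (hk : k ^ 2 < 1) : IntervalIntegrable (Kf k) volume 0 1 := by
  apply intervalIntegrable_of_bound _ (Real.sqrt (1 - k ^ 2))⁻¹
  · exact meas_aux _ (measKf k)
  · rintro t ⟨ht0, ht1⟩
    rcases eq_or_lt_of_le ht1 with h | h
    · subst h; simp [Kf]
    · have hb : 0 < Real.sqrt (1 - t) * Real.sqrt (1 - k ^ 2) := by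
        apply mul_pos <;> apply Real.sqrt_pos.2 <;> linarith
      have hle := key_sqrt_le hk ht0 h
      rw [Kf, abs_of_nonneg (by positivity)]
      calc 1 / Real.sqrt ((1 - t ^ 2) * (1 - k ^ 2 * t ^ 2))
          ≤ 1 / (Real.sqrt (1 - t) * Real.sqrt (1 - k ^ 2)) :=
            one_div_le_one_div_of_le hb hle
        _ = (Real.sqrt (1 - k ^ 2))⁻¹ / Real.sqrt (1 - t) := by
            rw [one_div, mul_inv, mul_comm, div_eq_mul_inv]

lemma intE {k : ℝ} (hk : k ^ 2 < 1) : IntervalIntegrable (Ef k) volume 0 1 := by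
  apply intervalIntegrable_of_bound _ 1
  · exact meas_aux _ (measEf k)
  · rintro t ⟨ht0, ht1⟩
    rcases eq_or_lt_of_le ht1 with h | h
    · subst h; simp [Ef]
    · have h1 : (0:ℝ) < 1 - t := by linarith
      have h2 : Real.sqrt (1 - t) ≤ Real.sqrt (1 - t ^ 2) := by
        apply Real.sqrt_le_sqrt; nlinarith
      have h3 : Real.sqrt (1 - k ^ 2 * t ^ 2) ≤ 1 :=
        Real.sqrt_le_one.2 (by nlinarith)
      rw [Ef, abs_of_nonneg (by positivity)]
      exact div_le_div₀ zero_le_one h3 (Real.sqrt_pos.2 h1) h2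
lemma key_sqrt_le' {x m t : ℝ} (hxm : x ^ 2 ≤ m ^ 2) (hm : m ^ 2 < 1)
    (ht0 : 0 ≤ t) (ht1 : t ≤ 1) :
    Real.sqrt (1 - t) * Real.sqrt (1 - m ^ 2) ≤
      Real.sqrt ((1 - t ^ 2) * (1 - x ^ 2 * t ^ 2)) := by
  rw [← Real.sqrt_mul (by linarith)]
  apply Real.sqrt_le_sqrt
  have h1 : (1:ℝ) - t ≤ 1 - t ^ 2 := by nlinarith
  have h2 : (1:ℝ) - m ^ 2 ≤ 1 - x ^ 2 * t ^ 2 := by nlinarith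
  exact mul_le_mul h1 h2 (by linarith) (by nlinarith)

lemma abs_lt_of_ball {k x ε : ℝ} (hx : x ∈ Metric.ball k ε) :
    |x| < |k| + ε := by
  rw [Metric.mem_ball, Real.dist_eq] at hx
  calc |x| = |x - k + k| := by ring_nf
    _ ≤ |x - k| + |k| := abs_add_le _ _
    _ < ε + |k| := by linarith
    _ = |k| + ε := by ring

set_option maxHeartbeats 1000000 in
lemma hasDerivAt_K {k : ℝ} (hk : k ^ 2 < 1) :
    HasDerivAt ellipticK (∫ t in (0:ℝ)..1, Kd k t) k := by
  have habs : |k| < 1 := by nlinarith [sq_abs k, abs_nonneg k]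
  set m : ℝ := (1 + |k|) / 2 with hm_def
  have hm0 : 0 < m := by positivity
  have hm1 : m < 1 := by rw [hm_def]; linarith
  have hm2 : m ^ 2 < 1 := by nlinarith
  have h1m : 0 < 1 - m ^ 2 := by linarith
  have hkm : |k| < m := by rw [hm_def]; linarith
  set ε : ℝ := (1 - |k|) / 2 with hε_def
  have hε : 0 < ε := by rw [hε_def]; linarith
  have hball : ∀ x ∈ Metric.ball k ε, x ^ 2 ≤ m ^ 2 := by
    intro x hx
    have h1 := abs_lt_of_ball hx
    have h2 : |x| ≤ m := by rw [hm_def]; rw [hε_def] at h1; linarith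
    nlinarith [sq_abs x, abs_nonneg x]
  have hballabs : ∀ x ∈ Metric.ball k ε, |x| ≤ m := by
    intro x hx
    have h1 := abs_lt_of_ball hx
    rw [hm_def]; rw [hε_def] at h1; linarith
  set C : ℝ := m / ((1 - m ^ 2) * Real.sqrt (1 - m ^ 2)) with hC_def
  have hC0 : 0 ≤ C := by rw [hC_def]; positivity
  have key := intervalIntegral.hasDerivAt_integral_of_dominated_loc_of_deriv_le
    (F := fun x t => Kf x t) (F' := fun x t => Kd x t) (x₀ := k)
    (bound := fun t => C / Real.sqrt (1 - t)) (a := 0) (b := 1) (μ := volume) (Metric.ball_mem_nhds k hε)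
    (Filter.Eventually.of_forall fun x => meas_aux _ (measKf x))
    (intK hk) (meas_aux _ (measKd k)) ?_ (intBound hC0) ?_
  · have h2 := key.2
    simp only [ellipticK, Kf] at h2 ⊢
    exact h2
  · -- the bound
    apply Filter.Eventually.of_forall
    intro t ht x hx
    rw [Set.uIoc_of_le (by norm_num : (0:ℝ) ≤ 1)] at ht
    obtain ⟨ht0, ht1⟩ := ht
    rcases eq_or_lt_of_le ht1 with h | h
    · subst h; simp [Kd]
    · have hx2 := hball x hx
      have hxabs := hballabs x hx
      have hxt : 0 < 1 - x ^ 2 * t ^ 2 := by nlinarith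
      have ht2 : 0 < 1 - t ^ 2 := by nlinarith
      have hU : (0:ℝ) ≤ (1 - t ^ 2) * (1 - x ^ 2 * t ^ 2) := by positivity
      set b := Real.sqrt ((1 - t ^ 2) * (1 - x ^ 2 * t ^ 2)) with hb_def
      have hb0 : 0 < b := Real.sqrt_pos.2 (by positivity)
      have hb3 : b ^ 3 = ((1 - t ^ 2) * (1 - x ^ 2 * t ^ 2)) * b := by
        rw [pow_succ, Real.sq_sqrt hU]
      have hKd : Kd x t = x * t ^ 2 / ((1 - x ^ 2 * t ^ 2) * b) := by
        rw [Kd, ← hb_def, hb3]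
        field_simp
      have hnorm : ‖(fun (x : ℝ) (t : ℝ) => Kd x t) x t‖ = |x| * t ^ 2 / ((1 - x ^ 2 * t ^ 2) * b) := by
        simp only [Real.norm_eq_abs, hKd, abs_div, abs_mul, abs_of_pos hxt,
          abs_of_pos hb0, abs_of_nonneg (sq_nonneg t), sq_abs]
      rw [hnorm]
      have hden : (1 - m ^ 2) * (Real.sqrt (1 - t) * Real.sqrt (1 - m ^ 2)) ≤
          (1 - x ^ 2 * t ^ 2) * b := by
        apply mul_le_mul (by nlinarith) (key_sqrt_le' hx2 hm2 ht0.le ht1) (by positivity)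
          (by positivity)
      have hden2 : (1 - m ^ 2) * Real.sqrt (1 - m ^ 2) * Real.sqrt (1 - t) ≤
          (1 - x ^ 2 * t ^ 2) * b := by
        calc (1 - m ^ 2) * Real.sqrt (1 - m ^ 2) * Real.sqrt (1 - t)
            = (1 - m ^ 2) * (Real.sqrt (1 - t) * Real.sqrt (1 - m ^ 2)) := by ring
          _ ≤ (1 - x ^ 2 * t ^ 2) * b := hden
      have hnum : |x| * t ^ 2 ≤ m := by nlinarith [abs_nonneg x]
      calc |x| * t ^ 2 / ((1 - x ^ 2 * t ^ 2) * b)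
          ≤ m / ((1 - m ^ 2) * Real.sqrt (1 - m ^ 2) * Real.sqrt (1 - t)) :=
            div_le_div₀ hm0.le hnum
              (by
                apply mul_pos (mul_pos h1m (Real.sqrt_pos.2 h1m))
                exact Real.sqrt_pos.2 (by linarith)) hden2
        _ = C / Real.sqrt (1 - t) := by
            have hs1 : Real.sqrt (1 - m ^ 2) ≠ 0 := (Real.sqrt_pos.2 h1m).ne'
            have hs2 : Real.sqrt (1 - t) ≠ 0 :=
              (Real.sqrt_pos.2 (show (0:ℝ) < 1 - t by linarith)).ne'
            rw [hC_def, div_div]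
            field_simp
            rw [hm_def]
            ring
  · -- differentiability
    apply Filter.Eventually.of_forall
    intro t ht x hx
    rw [Set.uIoc_of_le (by norm_num : (0:ℝ) ≤ 1)] at ht
    obtain ⟨ht0, ht1⟩ := ht
    rcases eq_or_lt_of_le ht1 with h | h
    · subst h
      have hfun : (fun y : ℝ => Kf y 1) = fun _ => (0:ℝ) := by
        funext y; simp [Kf]
      rw [hfun]
      have h0 : HasDerivAt (fun _ : ℝ => (0:ℝ)) 0 x := hasDerivAt_const x 0
      simpa [Kd] using h0
    · have hx2 := hball x hx
      have hxt : 0 < 1 - x ^ 2 * t ^ 2 := by nlinarith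
      have ht2 : 0 < 1 - t ^ 2 := by nlinarith
      have hU : 0 < (1 - t ^ 2) * (1 - x ^ 2 * t ^ 2) := by positivity
      have hsq : Real.sqrt ((1 - t ^ 2) * (1 - x ^ 2 * t ^ 2)) ≠ 0 :=
        ne_of_gt (Real.sqrt_pos.2 hU)
      have h1 : HasDerivAt (fun y : ℝ => 1 - y ^ 2 * t ^ 2) (-(2 * x * t ^ 2)) x := by
        simpa using ((hasDerivAt_pow 2 x).mul_const (t ^ 2)).const_sub 1
      have h2 := h1.const_mul (1 - t ^ 2)
      have h3 := h2.sqrt (ne_of_gt hU)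
      have h4 := h3.inv hsq
      have hfun : (fun y : ℝ => Kf y t) =
          fun y : ℝ => (Real.sqrt ((1 - t ^ 2) * (1 - y ^ 2 * t ^ 2)))⁻¹ := by
        funext y; rw [Kf, one_div]
      rw [hfun]
      refine h4.congr_deriv (Eq.symm ?_)
      show Kd x t = _
      rw [Kd]
      set b := Real.sqrt ((1 - t ^ 2) * (1 - x ^ 2 * t ^ 2)) with hb_def
      have hb0 : b ≠ 0 := hsq
      field_simp
set_option maxHeartbeats 1000000 in
lemma hasDerivAt_E {k : ℝ} (hk : k ^ 2 < 1) :
    HasDerivAt ellipticE (∫ t in (0:ℝ)..1, Ed k t) k := by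
  have habs : |k| < 1 := by nlinarith [sq_abs k, abs_nonneg k]
  set m : ℝ := (1 + |k|) / 2 with hm_def
  have hm0 : 0 < m := by positivity
  have hm1 : m < 1 := by rw [hm_def]; linarith
  have hm2 : m ^ 2 < 1 := by nlinarith
  have h1m : 0 < 1 - m ^ 2 := by linarith
  have hkm : |k| < m := by rw [hm_def]; linarith
  set ε : ℝ := (1 - |k|) / 2 with hε_def
  have hε : 0 < ε := by rw [hε_def]; linarith
  have hball : ∀ x ∈ Metric.ball k ε, x ^ 2 ≤ m ^ 2 := by
    intro x hx
    have h1 := abs_lt_of_ball hx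
    have h2 : |x| ≤ m := by rw [hm_def]; rw [hε_def] at h1; linarith
    nlinarith [sq_abs x, abs_nonneg x]
  have hballabs : ∀ x ∈ Metric.ball k ε, |x| ≤ m := by
    intro x hx
    have h1 := abs_lt_of_ball hx
    rw [hm_def]; rw [hε_def] at h1; linarith
  set C : ℝ := m / Real.sqrt (1 - m ^ 2) with hC_def
  have hC0 : 0 ≤ C := by rw [hC_def]; positivity
  have key := intervalIntegral.hasDerivAt_integral_of_dominated_loc_of_deriv_le
    (F := fun x t => Ef x t) (F' := fun x t => Ed x t) (x₀ := k)
    (bound := fun t => C / Real.sqrt (1 - t)) (a := 0) (b := 1) (μ := volume) (Metric.ball_mem_nhds k hε)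
    (Filter.Eventually.of_forall fun x => meas_aux _ (measEf x))
    (intE hk) (meas_aux _ (measEd k)) ?_ (intBound hC0) ?_
  · have h2 := key.2
    simp only [ellipticE, Ef] at h2 ⊢
    exact h2
  · -- the bound
    apply Filter.Eventually.of_forall
    intro t ht x hx
    rw [Set.uIoc_of_le (by norm_num : (0:ℝ) ≤ 1)] at ht
    obtain ⟨ht0, ht1⟩ := ht
    rcases eq_or_lt_of_le ht1 with h | h
    · subst h; simp [Ed]
    · have hx2 := hball x hx
      have hxabs := hballabs x hx
      have hxt : 0 < 1 - x ^ 2 * t ^ 2 := by nlinarith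
      have ht2 : 0 < 1 - t ^ 2 := by nlinarith
      have hnorm : ‖(fun (x : ℝ) (t : ℝ) => Ed x t) x t‖ =
          |x| * t ^ 2 / (Real.sqrt (1 - x ^ 2 * t ^ 2) * Real.sqrt (1 - t ^ 2)) := by
        simp only [Real.norm_eq_abs, Ed, abs_div, abs_neg, abs_mul,
          abs_of_nonneg (sq_nonneg t), abs_of_nonneg (Real.sqrt_nonneg (1 - x ^ 2 * t ^ 2)),
          abs_of_nonneg (Real.sqrt_nonneg (1 - t ^ 2))]
      rw [hnorm]
      have hden : Real.sqrt (1 - m ^ 2) * Real.sqrt (1 - t) ≤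
          Real.sqrt (1 - x ^ 2 * t ^ 2) * Real.sqrt (1 - t ^ 2) := by
        apply mul_le_mul
        · apply Real.sqrt_le_sqrt; nlinarith
        · apply Real.sqrt_le_sqrt; nlinarith
        · exact Real.sqrt_nonneg _
        · exact Real.sqrt_nonneg _
      have hnum : |x| * t ^ 2 ≤ m := by nlinarith [abs_nonneg x]
      calc |x| * t ^ 2 / (Real.sqrt (1 - x ^ 2 * t ^ 2) * Real.sqrt (1 - t ^ 2))
          ≤ m / (Real.sqrt (1 - m ^ 2) * Real.sqrt (1 - t)) :=
            div_le_div₀ hm0.le hnum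
              (mul_pos (Real.sqrt_pos.2 h1m) (Real.sqrt_pos.2 (by linarith))) hden
        _ = C / Real.sqrt (1 - t) := by
            have hs1 : Real.sqrt (1 - m ^ 2) ≠ 0 := (Real.sqrt_pos.2 h1m).ne'
            have hs2 : Real.sqrt (1 - t) ≠ 0 :=
              (Real.sqrt_pos.2 (show (0:ℝ) < 1 - t by linarith)).ne'
            rw [hC_def, div_div]
            field_simp
            rw [hm_def]
            ring
  · -- differentiability
    apply Filter.Eventually.of_forall
    intro t ht x hx
    rw [Set.uIoc_of_le (by norm_num : (0:ℝ) ≤ 1)] at ht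
    obtain ⟨ht0, ht1⟩ := ht
    rcases eq_or_lt_of_le ht1 with h | h
    · subst h
      have hfun : (fun y : ℝ => Ef y 1) = fun _ => (0:ℝ) := by
        funext y; simp [Ef]
      rw [hfun]
      have h0 : HasDerivAt (fun _ : ℝ => (0:ℝ)) 0 x := hasDerivAt_const x 0
      simpa [Ed] using h0
    · have hx2 := hball x hx
      have hxt : 0 < 1 - x ^ 2 * t ^ 2 := by nlinarith
      have ht2 : 0 < 1 - t ^ 2 := by nlinarith
      have h1 : HasDerivAt (fun y : ℝ => 1 - y ^ 2 * t ^ 2) (-(2 * x * t ^ 2)) x := by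
        simpa using ((hasDerivAt_pow 2 x).mul_const (t ^ 2)).const_sub 1
      have h3 := h1.sqrt (ne_of_gt hxt)
      have h4 := h3.div_const (Real.sqrt (1 - t ^ 2))
      have hfun : (fun y : ℝ => Ef y t) =
          fun y : ℝ => Real.sqrt (1 - y ^ 2 * t ^ 2) / Real.sqrt (1 - t ^ 2) := by
        funext y; rw [Ef]
      rw [hfun]
      refine h4.congr_deriv (Eq.symm ?_)
      show Ed x t = _
      rw [Ed]
      have hs1 : Real.sqrt (1 - x ^ 2 * t ^ 2) ≠ 0 := (Real.sqrt_pos.2 hxt).ne'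
      have hs2 : Real.sqrt (1 - t ^ 2) ≠ 0 := (Real.sqrt_pos.2 ht2).ne'
      field_simp
noncomputable def Jf (k t : ℝ) : ℝ := Real.sqrt (1 - t ^ 2) / Real.sqrt (1 - k ^ 2 * t ^ 2)
noncomputable def Gg (k t : ℝ) : ℝ := t * Real.sqrt (1 - t ^ 2) / Real.sqrt (1 - k ^ 2 * t ^ 2)
noncomputable def Gd (k t : ℝ) : ℝ :=
  (1 - 2 * t ^ 2 + k ^ 2 * t ^ 4) / (Real.sqrt (1 - t ^ 2) * Real.sqrt (1 - k ^ 2 * t ^ 2) ^ 3)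

lemma denom_pos {k t : ℝ} (hk : k ^ 2 < 1) (ht0 : 0 ≤ t) (ht1 : t ≤ 1) :
    0 < 1 - k ^ 2 * t ^ 2 := by
  have h1 : t ^ 2 ≤ 1 := by nlinarith
  have h2 : k ^ 2 * t ^ 2 ≤ k ^ 2 := by nlinarith [sq_nonneg k]
  linarith

lemma contJ {k : ℝ} (hk : k ^ 2 < 1) : ContinuousOn (Jf k) (Set.Icc (0:ℝ) 1) := by
  apply ContinuousOn.div
  · fun_prop
  · fun_prop
  · rintro t ⟨ht0, ht1⟩
    exact (Real.sqrt_pos.2 (denom_pos hk ht0 ht1)).ne'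

lemma intJ {k : ℝ} (hk : k ^ 2 < 1) : IntervalIntegrable (Jf k) volume 0 1 :=
  ((contJ hk).mono (by rw [Set.uIcc_of_le] <;> norm_num)).intervalIntegrable

lemma intGd {k : ℝ} (hk : k ^ 2 < 1) : IntervalIntegrable (Gd k) volume 0 1 := by
  have hg : 0 < 1 - k ^ 2 := by linarith
  apply intervalIntegrable_of_bound _ (4 / Real.sqrt (1 - k ^ 2) ^ 3)
  · exact meas_aux _ ((by fun_prop : Measurable fun t : ℝ =>
      (1 - 2 * t ^ 2 + k ^ 2 * t ^ 4)).div (by fun_prop))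
  · rintro t ⟨ht0, ht1⟩
    rcases eq_or_lt_of_le ht1 with h | h
    · subst h; simp [Gd]
    · have ht2 : 0 < 1 - t ^ 2 := by nlinarith
      have hkt := denom_pos hk ht0.le ht1
      have h1 : Real.sqrt (1 - k ^ 2) ^ 3 ≤ Real.sqrt (1 - k ^ 2 * t ^ 2) ^ 3 := by
        apply pow_le_pow_left₀ (Real.sqrt_nonneg _)
        apply Real.sqrt_le_sqrt; nlinarith
      have h2 : Real.sqrt (1 - t) ≤ Real.sqrt (1 - t ^ 2) := by
        apply Real.sqrt_le_sqrt; nlinarith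
      have hd1 : 0 < Real.sqrt (1 - t) * Real.sqrt (1 - k ^ 2) ^ 3 := by
        apply mul_pos (Real.sqrt_pos.2 (by linarith)) (by positivity)
      have hnum : |1 - 2 * t ^ 2 + k ^ 2 * t ^ 4| ≤ 4 := by
        rw [abs_le]; constructor <;> nlinarith
      rw [Gd, abs_div, abs_of_nonneg (by positivity : (0:ℝ) ≤
        Real.sqrt (1 - t ^ 2) * Real.sqrt (1 - k ^ 2 * t ^ 2) ^ 3)]
      calc |1 - 2 * t ^ 2 + k ^ 2 * t ^ 4| / (Real.sqrt (1 - t ^ 2) * Real.sqrt (1 - k ^ 2 * t ^ 2) ^ 3)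
          ≤ 4 / (Real.sqrt (1 - t) * Real.sqrt (1 - k ^ 2) ^ 3) := by
            apply div_le_div₀ (by norm_num) hnum hd1
            exact mul_le_mul h2 h1 (by positivity) (Real.sqrt_nonneg _)
        _ = 4 / Real.sqrt (1 - k ^ 2) ^ 3 / Real.sqrt (1 - t) := by
            rw [div_div]; ring_nf
lemma contG {k : ℝ} (hk : k ^ 2 < 1) : ContinuousOn (Gg k) (Set.Icc (0:ℝ) 1) := by
  apply ContinuousOn.div
  · fun_prop
  · fun_prop
  · rintro t ⟨ht0, ht1⟩
    exact (Real.sqrt_pos.2 (denom_pos hk ht0 ht1)).ne'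

set_option maxHeartbeats 1000000 in
lemma derivG {k : ℝ} (hk : k ^ 2 < 1) (t : ℝ) (ht : t ∈ Set.Ioo (0:ℝ) 1) :
    HasDerivAt (Gg k) (Gd k t) t := by
  obtain ⟨ht0, ht1⟩ := ht
  have ht2 : 0 < 1 - t ^ 2 := by nlinarith
  have hkt : 0 < 1 - k ^ 2 * t ^ 2 := denom_pos hk ht0.le ht1.le
  have ha : Real.sqrt (1 - t ^ 2) ≠ 0 := (Real.sqrt_pos.2 ht2).ne'
  have hb : Real.sqrt (1 - k ^ 2 * t ^ 2) ≠ 0 := (Real.sqrt_pos.2 hkt).ne'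
  have h1 : HasDerivAt (fun y : ℝ => 1 - y ^ 2) (-(2 * t)) t := by
    simpa using (hasDerivAt_pow 2 t).const_sub 1
  have h2 := h1.sqrt (ne_of_gt ht2)
  have hnum := (hasDerivAt_id t).mul h2
  have h3 : HasDerivAt (fun y : ℝ => 1 - k ^ 2 * y ^ 2) (-(k ^ 2 * (2 * t))) t := by
    simpa using ((hasDerivAt_pow 2 t).const_mul (k ^ 2)).const_sub 1
  have h4 := h3.sqrt (ne_of_gt hkt)
  have hG := hnum.div h4 hb
  have hfun : Gg k = fun y : ℝ => y * Real.sqrt (1 - y ^ 2) / Real.sqrt (1 - k ^ 2 * y ^ 2) := by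
    funext y; rw [Gg]
  rw [hfun]
  refine hG.congr_deriv (Eq.symm ?_)
  rw [Gd]
  simp only [Pi.mul_apply, id_eq]
  have ha2 : Real.sqrt (1 - t ^ 2) ^ 2 = 1 - t ^ 2 := Real.sq_sqrt ht2.le
  have hb2 : Real.sqrt (1 - k ^ 2 * t ^ 2) ^ 2 = 1 - k ^ 2 * t ^ 2 := Real.sq_sqrt hkt.le
  field_simp
  rw [show (1:ℝ) - t ^ 2 * k ^ 2 = 1 - k ^ 2 * t ^ 2 by ring]
  set S1 := Real.sqrt (1 - t ^ 2)
  set S2 := Real.sqrt (1 - k ^ 2 * t ^ 2)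
  congr 1
  linear_combination (t ^ 2 - S1 ^ 2) * hb2 - ha2

lemma FTC_G {k : ℝ} (hk : k ^ 2 < 1) : ∫ t in (0:ℝ)..1, Gd k t = 0 := by
  rw [intervalIntegral.integral_eq_sub_of_hasDerivAt_of_le (by norm_num) (contG hk)
    (fun t ht => derivG hk t ht) (intGd hk)]
  simp [Gg]

lemma ptwise_K {k : ℝ} (hk : k ^ 2 < 1) (hk0 : k ≠ 0) :
    ∀ t ∈ Set.uIcc (0:ℝ) 1, Kd k t = (k / (1 - k ^ 2)) * (Jf k t - Gd k t) := by
  rw [Set.uIcc_of_le (by norm_num : (0:ℝ) ≤ 1)]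
  rintro t ⟨ht0, ht1⟩
  rcases eq_or_lt_of_le ht1 with h | h
  · subst h; simp [Kd, Jf, Gd]
  · have ht2 : 0 < 1 - t ^ 2 := by nlinarith
    have hkt : 0 < 1 - k ^ 2 * t ^ 2 := denom_pos hk ht0 ht1
    have ha : Real.sqrt (1 - t ^ 2) ≠ 0 := (Real.sqrt_pos.2 ht2).ne'
    have hb : Real.sqrt (1 - k ^ 2 * t ^ 2) ≠ 0 := (Real.sqrt_pos.2 hkt).ne'
    have ha2 : Real.sqrt (1 - t ^ 2) ^ 2 = 1 - t ^ 2 := Real.sq_sqrt ht2.le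
    have hb2 : Real.sqrt (1 - k ^ 2 * t ^ 2) ^ 2 = 1 - k ^ 2 * t ^ 2 := Real.sq_sqrt hkt.le
    have hg : (1:ℝ) - k ^ 2 ≠ 0 := by intro hcon; nlinarith
    rw [Kd, Jf, Gd, Real.sqrt_mul ht2.le]
    field_simp
    set S1 := Real.sqrt (1 - t ^ 2)
    set S2 := Real.sqrt (1 - k ^ 2 * t ^ 2)
    linear_combination (-(S1^4)) * hb2 +
      ((1 - 2*t^2 + k^2*t^4) - (1 - k^2*t^2)*(S1^2 + (1 - t^2))) * ha2

lemma ptwise_E {k : ℝ} (hk : k ^ 2 < 1) (hk0 : k ≠ 0) :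
    ∀ t ∈ Set.uIcc (0:ℝ) 1, Ed k t = (1 / k) * (Ef k t - Kf k t) := by
  rw [Set.uIcc_of_le (by norm_num : (0:ℝ) ≤ 1)]
  rintro t ⟨ht0, ht1⟩
  rcases eq_or_lt_of_le ht1 with h | h
  · subst h; simp [Ed, Ef, Kf]
  · have ht2 : 0 < 1 - t ^ 2 := by nlinarith
    have hkt : 0 < 1 - k ^ 2 * t ^ 2 := denom_pos hk ht0 ht1
    have ha : Real.sqrt (1 - t ^ 2) ≠ 0 := (Real.sqrt_pos.2 ht2).ne'
    have hb : Real.sqrt (1 - k ^ 2 * t ^ 2) ≠ 0 := (Real.sqrt_pos.2 hkt).ne'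
    have ha2 : Real.sqrt (1 - t ^ 2) ^ 2 = 1 - t ^ 2 := Real.sq_sqrt ht2.le
    have hb2 : Real.sqrt (1 - k ^ 2 * t ^ 2) ^ 2 = 1 - k ^ 2 * t ^ 2 := Real.sq_sqrt hkt.le
    rw [Ed, Ef, Kf, Real.sqrt_mul ht2.le]
    field_simp
    set S1 := Real.sqrt (1 - t ^ 2)
    set S2 := Real.sqrt (1 - k ^ 2 * t ^ 2)
    linear_combination (-1) * hb2

lemma ptwise_J {k : ℝ} (hk : k ^ 2 < 1) :
    ∀ t ∈ Set.uIcc (0:ℝ) 1, Ef k t - (1 - k ^ 2) * Kf k t = k ^ 2 * Jf k t := by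
  rw [Set.uIcc_of_le (by norm_num : (0:ℝ) ≤ 1)]
  rintro t ⟨ht0, ht1⟩
  rcases eq_or_lt_of_le ht1 with h | h
  · subst h; simp [Ef, Kf, Jf]
  · have ht2 : 0 < 1 - t ^ 2 := by nlinarith
    have hkt : 0 < 1 - k ^ 2 * t ^ 2 := denom_pos hk ht0 ht1
    have ha : Real.sqrt (1 - t ^ 2) ≠ 0 := (Real.sqrt_pos.2 ht2).ne'
    have hb : Real.sqrt (1 - k ^ 2 * t ^ 2) ≠ 0 := (Real.sqrt_pos.2 hkt).ne'
    have ha2 : Real.sqrt (1 - t ^ 2) ^ 2 = 1 - t ^ 2 := Real.sq_sqrt ht2.le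
    have hb2 : Real.sqrt (1 - k ^ 2 * t ^ 2) ^ 2 = 1 - k ^ 2 * t ^ 2 := Real.sq_sqrt hkt.le
    rw [Ef, Kf, Jf, Real.sqrt_mul ht2.le]
    field_simp
    set S1 := Real.sqrt (1 - t ^ 2)
    set S2 := Real.sqrt (1 - k ^ 2 * t ^ 2)
    linear_combination hb2 - k^2 * ha2
lemma ellipticK_eq (k : ℝ) : ellipticK k = ∫ t in (0:ℝ)..1, Kf k t := rfl
lemma ellipticE_eq (k : ℝ) : ellipticE k = ∫ t in (0:ℝ)..1, Ef k t := rfl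

lemma hasDerivAt_K' {k : ℝ} (hk0 : 0 < k) (hk1 : k < 1) :
    HasDerivAt ellipticK
      ((ellipticE k - (1 - k ^ 2) * ellipticK k) / (k * (1 - k ^ 2))) k := by
  have hk2 : k ^ 2 < 1 := by nlinarith
  have hg : (0:ℝ) < 1 - k ^ 2 := by linarith
  have hJ : ellipticE k - (1 - k ^ 2) * ellipticK k
      = k ^ 2 * ∫ t in (0:ℝ)..1, Jf k t := by
    rw [ellipticE_eq, ellipticK_eq, ← intervalIntegral.integral_const_mul,
      ← intervalIntegral.integral_sub (intE hk2) ((intK hk2).const_mul _),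
      ← intervalIntegral.integral_const_mul]
    exact intervalIntegral.integral_congr fun t ht => ptwise_J hk2 t ht
  have hIK : (∫ t in (0:ℝ)..1, Kd k t)
      = (ellipticE k - (1 - k ^ 2) * ellipticK k) / (k * (1 - k ^ 2)) := by
    rw [intervalIntegral.integral_congr fun t ht => ptwise_K hk2 hk0.ne' t ht,
      intervalIntegral.integral_const_mul,
      intervalIntegral.integral_sub (intJ hk2) (intGd hk2), FTC_G hk2, hJ]
    field_simp
    ring
  rw [← hIK]
  exact hasDerivAt_K hk2

lemma hasDerivAt_E' {k : ℝ} (hk0 : 0 < k) (hk1 : k < 1) :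
    HasDerivAt ellipticE ((ellipticE k - ellipticK k) / k) k := by
  have hk2 : k ^ 2 < 1 := by nlinarith
  have hIE : (∫ t in (0:ℝ)..1, Ed k t) = (ellipticE k - ellipticK k) / k := by
    rw [intervalIntegral.integral_congr fun t ht => ptwise_E hk2 hk0.ne' t ht,
      intervalIntegral.integral_const_mul,
      intervalIntegral.integral_sub (intE hk2) (intK hk2),
      ← ellipticE_eq, ← ellipticK_eq, one_div, inv_mul_eq_div]
  rw [← hIE]
  exact hasDerivAt_E hk2

lemma Kpos {k : ℝ} (hk : k ^ 2 < 1) : 0 < ellipticK k := by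
  rw [ellipticK_eq]
  apply intervalIntegral.intervalIntegral_pos_of_pos_on (intK hk) _ one_pos
  rintro t ⟨ht0, ht1⟩
  have ht2 : 0 < 1 - t ^ 2 := by nlinarith
  have hkt := denom_pos hk ht0.le ht1.le
  rw [Kf]
  positivity

lemma Epos {k : ℝ} (hk : k ^ 2 < 1) : 0 < ellipticE k := by
  rw [ellipticE_eq]
  apply intervalIntegral.intervalIntegral_pos_of_pos_on (intE hk) _ one_pos
  rintro t ⟨ht0, ht1⟩
  have ht2 : 0 < 1 - t ^ 2 := by nlinarith
  have hkt := denom_pos hk ht0.le ht1.le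
  rw [Ef]
  positivity

lemma EltK {k : ℝ} (hk0 : 0 < k) (hk1 : k < 1) : ellipticE k < ellipticK k := by
  have hk2 : k ^ 2 < 1 := by nlinarith
  have h : 0 < ∫ t in (0:ℝ)..1, (Kf k t - Ef k t) := by
    apply intervalIntegral.intervalIntegral_pos_of_pos_on
      ((intK hk2).sub (intE hk2)) _ one_pos
    rintro t ⟨ht0, ht1⟩
    have ht2 : 0 < 1 - t ^ 2 := by nlinarith
    have hkt := denom_pos hk2 ht0.le ht1.le
    have ha : 0 < Real.sqrt (1 - t ^ 2) := Real.sqrt_pos.2 ht2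
    have hb : 0 < Real.sqrt (1 - k ^ 2 * t ^ 2) := Real.sqrt_pos.2 hkt
    have hb2 : Real.sqrt (1 - k ^ 2 * t ^ 2) ^ 2 = 1 - k ^ 2 * t ^ 2 := Real.sq_sqrt hkt.le
    rw [sub_pos, Ef, Kf, Real.sqrt_mul ht2.le,
      div_lt_div_iff₀ ha (mul_pos ha hb)]
    nlinarith [mul_pos (mul_pos (pow_pos hk0 2) (pow_pos ht0 2)) ha]
  have heq : (∫ t in (0:ℝ)..1, (Kf k t - Ef k t)) = ellipticK k - ellipticE k := by
    rw [intervalIntegral.integral_sub (intK hk2) (intE hk2), ← ellipticK_eq, ← ellipticE_eq]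
  linarith [heq ▸ h]

lemma E0K0 : ellipticE 0 = ellipticK 0 := by
  rw [ellipticE_eq, ellipticK_eq]
  apply intervalIntegral.integral_congr
  intro t ht
  simp [Ef, Kf]

lemma Wpos {k : ℝ} (hk0 : 0 < k) (hk1 : k < 1) :
    (1 - k ^ 2) * ellipticK k ^ 2 < ellipticE k ^ 2 := by
  set W : ℝ → ℝ := fun x => ellipticE x * ellipticE x -
    (1 - x ^ 2) * (ellipticK x * ellipticK x) with hW_def
  have hder : ∀ x : ℝ, x ^ 2 < 1 → HasDerivAt W
      (((∫ t in (0:ℝ)..1, Ed x t) * ellipticE x + ellipticE x * ∫ t in (0:ℝ)..1, Ed x t) -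
        (-(2 * x) * (ellipticK x * ellipticK x) +
          (1 - x ^ 2) * ((∫ t in (0:ℝ)..1, Kd x t) * ellipticK x +
            ellipticK x * ∫ t in (0:ℝ)..1, Kd x t))) x := by
    intro x hx2
    have hP : HasDerivAt (fun y : ℝ => 1 - y ^ 2) (-(2 * x)) x := by
      simpa using (hasDerivAt_pow 2 x).const_sub 1
    exact ((hasDerivAt_E hx2).mul (hasDerivAt_E hx2)).sub
      (hP.mul ((hasDerivAt_K hx2).mul (hasDerivAt_K hx2)))
  have hcont : ContinuousOn W (Set.Ico 0 1) := by
    intro x hx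
    obtain ⟨hx0, hx1⟩ := hx
    have hx2 : x ^ 2 < 1 := by nlinarith
    exact ((hder x hx2).continuousAt).continuousWithinAt
  have hmono : StrictMonoOn W (Set.Ico 0 1) := by
    apply strictMonoOn_of_deriv_pos (convex_Ico 0 1) hcont
    rw [interior_Ico]
    rintro x ⟨hx0, hx1⟩
    have hx2 : x ^ 2 < 1 := by nlinarith
    have hg : (0:ℝ) < 1 - x ^ 2 := by linarith
    have hP : HasDerivAt (fun y : ℝ => 1 - y ^ 2) (-(2 * x)) x := by
      simpa using (hasDerivAt_pow 2 x).const_sub 1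
    have hWc := ((hasDerivAt_E' hx0 hx1).mul (hasDerivAt_E' hx0 hx1)).sub
      (hP.mul ((hasDerivAt_K' hx0 hx1).mul (hasDerivAt_K' hx0 hx1)))
    rw [show deriv W x = _ from hWc.deriv, Pi.mul_apply]
    have hne : ellipticE x - ellipticK x < 0 := sub_neg.2 (EltK hx0 hx1)
    have hval : ((ellipticE x - ellipticK x) / x * ellipticE x +
          ellipticE x * ((ellipticE x - ellipticK x) / x)) -
        (-(2 * x) * (ellipticK x * ellipticK x) + (1 - x ^ 2) *
          ((ellipticE x - (1 - x ^ 2) * ellipticK x) / (x * (1 - x ^ 2)) * ellipticK x +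
            ellipticK x * ((ellipticE x - (1 - x ^ 2) * ellipticK x) / (x * (1 - x ^ 2))))) =
        2 * (ellipticE x - ellipticK x) ^ 2 / x := by
      field_simp
      ring
    rw [hval]
    have h2 : 0 < (ellipticE x - ellipticK x) ^ 2 := by nlinarith [hne]
    exact div_pos (by linarith) hx0
  have h0 : W 0 = 0 := by
    simp [hW_def, E0K0]
  have hk2 : k ^ 2 < 1 := by nlinarith
  have hlt : W 0 < W k := by
    apply hmono
    · exact ⟨le_refl 0, by norm_num⟩
    · exact ⟨hk0.le, hk1⟩
    · exact hk0
  rw [h0] at hlt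
  have h2 : 0 < ellipticE k * ellipticE k -
      (1 - k ^ 2) * (ellipticK k * ellipticK k) := hlt
  nlinarith [h2]
lemma step1 {k s : ℝ} (hk0 : 0 < k) (hk1 : k < 1)
    (hs2 : s ^ 2 = k ^ 4 - k ^ 2 + 1) (hs0 : 0 < s) (hs1 : s ≤ 1) :
    11 - 11 * k ^ 2 + 8 * k ^ 4 ≤ 8 * (2 - k ^ 2) * s := by
  have hsq : (11 - 11 * k ^ 2 + 8 * k ^ 4) ^ 2 ≤ (8 * (2 - k ^ 2) * s) ^ 2 := by
    have : (8 * (2 - k ^ 2) * s) ^ 2 = 64 * (2 - k ^ 2) ^ 2 * (k ^ 4 - k ^ 2 + 1) := by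
      rw [mul_pow, mul_pow, hs2]; ring
    rw [this]
    have e1 : (0:ℝ) ≤ 1 - k ^ 2 := by nlinarith
    have e2 : (0:ℝ) ≤ 15 - 15 * k ^ 2 + 16 * k ^ 4 := by nlinarith [sq_nonneg (32 * k ^ 2 - 15)]
    nlinarith [mul_nonneg e1 e2]
  have hpos : 0 < 8 * (2 - k ^ 2) * s + (11 - 11 * k ^ 2 + 8 * k ^ 4) := by nlinarith
  nlinarith [hsq, hpos]

lemma stepB {k s r : ℝ} (hk0 : 0 < k) (hk1 : k < 1)
    (hs2 : s ^ 2 = k ^ 4 - k ^ 2 + 1) (hs0 : 0 < s) (hs1 : s ≤ 1)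
    (hr2 : r ^ 2 = 1 - k ^ 2) (hr0 : 0 < r) (hr1 : r ≤ 1) :
    0 ≤ 2 * s ^ 2 + 2 * (k ^ 2 - 2) * s + r * (4 * s + k ^ 2 - 2) := by
  have hs34 : 3 / 4 ≤ s := by
    nlinarith [mul_nonneg hs0.le (sub_nonneg.2 hs1), sq_nonneg (k ^ 2 - 1 / 2)]
  have h45 : 0 < 4 * s + k ^ 2 - 2 := by nlinarith
  have h1 := step1 hk0 hk1 hs2 hs0 hs1
  have key : (r * (4 * s + k ^ 2 - 2)) ^ 2 - (2 * s * (2 - k ^ 2 - s)) ^ 2 =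
      k ^ 4 * (8 * (2 - k ^ 2) * s - (11 - 11 * k ^ 2 + 8 * k ^ 4)) := by
    linear_combination ((4 * s + k ^ 2 - 2) ^ 2) * hr2 +
      (-4 * s ^ 2 + 8 * (2 - k ^ 2) * s - 4 + 4 * k ^ 2 - 8 * k ^ 4) * hs2
  have hge : (2 * s * (2 - k ^ 2 - s)) ^ 2 ≤ (r * (4 * s + k ^ 2 - 2)) ^ 2 := by
    nlinarith [key, pow_pos hk0 4]
  have hrhs : 0 ≤ 2 * s * (2 - k ^ 2 - s) := by nlinarith
  have hlhs : 0 < r * (4 * s + k ^ 2 - 2) := mul_pos hr0 h45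
  nlinarith [hge, hrhs, hlhs]

lemma stepA {k s r : ℝ} (hk0 : 0 < k) (hk1 : k < 1)
    (hs2 : s ^ 2 = k ^ 4 - k ^ 2 + 1) (hs0 : 0 < s) (hs1 : s ≤ 1)
    (hr2 : r ^ 2 = 1 - k ^ 2) (hr0 : 0 < r) (hr1 : r ≤ 1) :
    0 ≤ 3 * s * (1 - k ^ 2) + 2 * (s + k ^ 2 - 2) * s * r +
      (1 - k ^ 2) * (s + k ^ 2 - 2) := by
  have hB := stepB hk0 hk1 hs2 hs0 hs1 hr2 hr0 hr1
  have hAB : 3 * s * (1 - k ^ 2) + 2 * (s + k ^ 2 - 2) * s * r +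
      (1 - k ^ 2) * (s + k ^ 2 - 2) =
      r * (2 * s ^ 2 + 2 * (k ^ 2 - 2) * s + r * (4 * s + k ^ 2 - 2)) := by
    linear_combination (-(4 * s + k ^ 2 - 2)) * hr2
  rw [hAB]
  exact mul_nonneg hr0.le hB
lemma Tpos {k : ℝ} (hk0 : 0 < k) (hk1 : k < 1) :
    0 < 3 * Real.sqrt (k ^ 4 - k ^ 2 + 1) * ellipticE k ^ 2 +
      2 * (Real.sqrt (k ^ 4 - k ^ 2 + 1) + k ^ 2 - 2) * Real.sqrt (k ^ 4 - k ^ 2 + 1) *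
        ellipticK k * ellipticE k +
      (1 - k ^ 2) * (Real.sqrt (k ^ 4 - k ^ 2 + 1) + k ^ 2 - 2) * ellipticK k ^ 2 := by
  have hk2 : k ^ 2 < 1 := by nlinarith
  have hg : (0:ℝ) < 1 - k ^ 2 := by linarith
  have hsarg : (0:ℝ) < k ^ 4 - k ^ 2 + 1 := by nlinarith [sq_nonneg (k ^ 2 - 1 / 2)]
  set s := Real.sqrt (k ^ 4 - k ^ 2 + 1) with hs_def
  set r := Real.sqrt (1 - k ^ 2) with hr_def
  have hs2 : s ^ 2 = k ^ 4 - k ^ 2 + 1 := Real.sq_sqrt hsarg.le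
  have hr2 : r ^ 2 = 1 - k ^ 2 := Real.sq_sqrt hg.le
  have hs0 : 0 < s := Real.sqrt_pos.2 hsarg
  have hr0 : 0 < r := Real.sqrt_pos.2 hg
  have hs1 : s ≤ 1 := by
    rw [hs_def]; apply Real.sqrt_le_one.2; nlinarith
  have hr1 : r ≤ 1 := by
    rw [hr_def]; apply Real.sqrt_le_one.2; nlinarith
  set K := ellipticK k with hK_def
  set E := ellipticE k with hE_def
  have hK0 : 0 < K := Kpos hk2
  have hE0 : 0 < E := Epos hk2
  have hEK : E < K := EltK hk0 hk1
  have hW := Wpos hk0 hk1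
  have hrK : r * K < E := by nlinarith [hW, hr2, mul_pos hr0 hK0]
  have hA := stepA hk0 hk1 hs2 hs0 hs1 hr2 hr0 hr1
  have hfac : 0 < 3 * E + 3 * r * K + 2 * (s + k ^ 2 - 2) * K := by
    have hcs : 2 - k ^ 2 - s ≤ (1 - k ^ 2) * (1 + k ^ 2) := by
      nlinarith [mul_nonneg hs0.le (sub_nonneg.2 hs1)]
    have hcr : (1 - k ^ 2) * (1 + k ^ 2) ≤ 2 * r := by nlinarith [hr2, hr0, hr1]
    nlinarith [hrK, mul_pos hr0 hK0, hK0]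
  have hTeq : 3 * s * E ^ 2 + 2 * (s + k ^ 2 - 2) * s * K * E +
      (1 - k ^ 2) * (s + k ^ 2 - 2) * K ^ 2 =
      (3 * s * (1 - k ^ 2) + 2 * (s + k ^ 2 - 2) * s * r +
        (1 - k ^ 2) * (s + k ^ 2 - 2)) * K ^ 2 +
      s * (E - r * K) * (3 * E + 3 * r * K + 2 * (s + k ^ 2 - 2) * K) := by
    linear_combination (3 * s * K ^ 2) * hr2
  rw [hTeq]
  have h2 := mul_pos (mul_pos hs0 (sub_pos.2 hrK)) hfac
  nlinarith [mul_nonneg hA (sq_nonneg K)]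

noncomputable def Dval (k : ℝ) : ℝ :=
  ((ellipticE k - (1 - k ^ 2) * ellipticK k) / (k * (1 - k ^ 2)) * ellipticK k +
      ellipticK k * ((ellipticE k - (1 - k ^ 2) * ellipticK k) / (k * (1 - k ^ 2)))) *
    (Real.sqrt (k ^ 4 - k ^ 2 + 1) + k ^ 2 - 2) +
  ellipticK k * ellipticK k *
    ((4 * k ^ 3 - 2 * k) / (2 * Real.sqrt (k ^ 4 - k ^ 2 + 1)) + 2 * k) +
  (3 * ((ellipticE k - (1 - k ^ 2) * ellipticK k) / (k * (1 - k ^ 2))) * ellipticE k +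
    3 * ellipticK k * ((ellipticE k - ellipticK k) / k))

set_option maxHeartbeats 1000000 in
lemma hasDerivAt_phi {k : ℝ} (hk0 : 0 < k) (hk1 : k < 1) :
    HasDerivAt (fun x : ℝ =>
      ellipticK x ^ 2 * (Real.sqrt (x ^ 4 - x ^ 2 + 1) + x ^ 2 - 2) +
        3 * ellipticK x * ellipticE x) (Dval k) k := by
  have hk2 : k ^ 2 < 1 := by nlinarith
  have hsarg : (0:ℝ) < k ^ 4 - k ^ 2 + 1 := by nlinarith [sq_nonneg (k ^ 2 - 1 / 2)]
  have hK' := hasDerivAt_K' hk0 hk1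
  have hE' := hasDerivAt_E' hk0 hk1
  have hpoly : HasDerivAt (fun y : ℝ => y ^ 4 - y ^ 2 + 1) (4 * k ^ 3 - 2 * k) k := by
    simpa using ((hasDerivAt_pow 4 k).sub (hasDerivAt_pow 2 k)).add_const 1
  have hsq := hpoly.sqrt (ne_of_gt hsarg)
  have hk2' : HasDerivAt (fun y : ℝ => y ^ 2) (2 * k) k := by
    simpa using hasDerivAt_pow 2 k
  have hc : HasDerivAt (fun y : ℝ => Real.sqrt (y ^ 4 - y ^ 2 + 1) + y ^ 2 - 2)
      ((4 * k ^ 3 - 2 * k) / (2 * Real.sqrt (k ^ 4 - k ^ 2 + 1)) + 2 * k) k :=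
    (hsq.add hk2').sub_const 2
  have hKK := hK'.mul (hasDerivAt_K' hk0 hk1)
  have h1 := hKK.mul hc
  have h2 := (hK'.const_mul (3:ℝ)).mul hE'
  have h3 := h1.add h2
  have hfun : (fun x : ℝ =>
      ellipticK x ^ 2 * (Real.sqrt (x ^ 4 - x ^ 2 + 1) + x ^ 2 - 2) +
        3 * ellipticK x * ellipticE x) =
      fun x : ℝ => ellipticK x * ellipticK x *
        (Real.sqrt (x ^ 4 - x ^ 2 + 1) + x ^ 2 - 2) +
        3 * ellipticK x * ellipticE x := by
    funext x; ring
  rw [hfun]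
  exact h3.congr_deriv rfl

lemma Dval_pos {k : ℝ} (hk0 : 0 < k) (hk1 : k < 1) : 0 < Dval k := by
  have hk2 : k ^ 2 < 1 := by nlinarith
  have hg : (0:ℝ) < 1 - k ^ 2 := by linarith
  have hsarg : (0:ℝ) < k ^ 4 - k ^ 2 + 1 := by nlinarith [sq_nonneg (k ^ 2 - 1 / 2)]
  have hs0 : 0 < Real.sqrt (k ^ 4 - k ^ 2 + 1) := Real.sqrt_pos.2 hsarg
  have hs2 : Real.sqrt (k ^ 4 - k ^ 2 + 1) ^ 2 = k ^ 4 - k ^ 2 + 1 :=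
    Real.sq_sqrt hsarg.le
  have hT := Tpos hk0 hk1
  have hDT : Dval k = (3 * Real.sqrt (k ^ 4 - k ^ 2 + 1) * ellipticE k ^ 2 +
      2 * (Real.sqrt (k ^ 4 - k ^ 2 + 1) + k ^ 2 - 2) * Real.sqrt (k ^ 4 - k ^ 2 + 1) *
        ellipticK k * ellipticE k +
      (1 - k ^ 2) * (Real.sqrt (k ^ 4 - k ^ 2 + 1) + k ^ 2 - 2) * ellipticK k ^ 2) /
      (k * (1 - k ^ 2) * Real.sqrt (k ^ 4 - k ^ 2 + 1)) := by
    have hden : (0:ℝ) < k * (1 - k ^ 2) * Real.sqrt (k ^ 4 - k ^ 2 + 1) := by positivity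
    rw [eq_div_iff hden.ne', Dval]
    set S := Real.sqrt (k ^ 4 - k ^ 2 + 1) with hS
    field_simp
    linear_combination (-4 * (1 - k ^ 2) * ellipticK k ^ 2) * hs2
  rw [hDT]
  exact div_pos hT (by positivity)

/-- The function `k ↦ K(k)²(√(k⁴ − k² + 1) + k² − 2) + 3K(k)E(k)` is strictly
increasing on `(0, 1)`. -/
theorem stmt_18 :
    StrictMonoOn
      (fun k : ℝ =>
        ellipticK k ^ 2 * (Real.sqrt (k ^ 4 - k ^ 2 + 1) + k ^ 2 - 2) +
          3 * ellipticK k * ellipticE k)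
      (Set.Ioo (0 : ℝ) 1) := by
  apply strictMonoOn_of_deriv_pos (convex_Ioo 0 1)
  · intro x hx
    exact (hasDerivAt_phi hx.1 hx.2).continuousAt.continuousWithinAt
  · rw [interior_Ioo]
    rintro x ⟨hx0, hx1⟩
    rw [(hasDerivAt_phi hx0 hx1).deriv]
    exact Dval_pos hx0 hx1
end
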